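/- Let X be a separable Banach space and T ∈ L(X) U-frequently hypercyclic. Then the set UFHC(T) of U-frequently hypercyclic vectors is residual in X (contains a dense Gδ set). -/

import Mathlib

/-!
Fix a point `x` all of whose visit sets have positive upper density, and a countable basis
`(U_k)` with `δ_k` the upper density of the visits of `x` to `U_k`. The points visiting `U_k`
with partial density at least `δ_k / 2` at infinitely many times form a Gδ, since the partial
density at a fixed time is lower semicontinuous in the point. This Gδ contains the orbit of `x`,
because dropping the first `p` terms of a sequence does not lower its upper density, and the orbit
is dense, so it is residual. The intersection over `k` is still residual and consists of points
all of whose visit sets have positive upper density.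
-/

open Filter Topology
open scoped Classical ENNReal

noncomputable def upperDensity (A : Set ℕ) : ℝ :=
  limsup (fun n : ℕ => (((Finset.range (n+1)).filter (· ∈ A)).card : ℝ) / (n+1)) atTop

noncomputable def lowerDensity (A : Set ℕ) : ℝ :=
  liminf (fun n : ℕ => (((Finset.range (n+1)).filter (· ∈ A)).card : ℝ) / (n+1)) atTop

noncomputable def upperDensityZ (A : Set ℤ) : ℝ :=
  limsup (fun n : ℕ => (((Finset.Icc (-(n:ℤ)) (n:ℤ)).filter (· ∈ A)).card : ℝ) / (2*n+1)) atTop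

def freqHCVec {X : Type*} [NormedAddCommGroup X] [NormedSpace ℝ X]
    (T : X →L[ℝ] X) (x : X) : Prop :=
  ∀ U : Set X, IsOpen U → U.Nonempty → 0 < lowerDensity {n : ℕ | (T ^ n) x ∈ U}

def uFreqHCVec {X : Type*} [NormedAddCommGroup X] [NormedSpace ℝ X]
    (T : X →L[ℝ] X) (x : X) : Prop :=
  ∀ U : Set X, IsOpen U → U.Nonempty → 0 < upperDensity {n : ℕ | (T ^ n) x ∈ U}

noncomputable def partialDensity (A : Set ℕ) (n : ℕ) : ℝ :=
  (((Finset.range (n+1)).filter (· ∈ A)).card : ℝ) / (n+1)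

lemma partialDensity_nonneg (A : Set ℕ) (n : ℕ) : 0 ≤ partialDensity A n := by
  unfold partialDensity; positivity

lemma partialDensity_le_one (A : Set ℕ) (n : ℕ) : partialDensity A n ≤ 1 := by
  rw [partialDensity, div_le_one (by positivity)]
  exact_mod_cast (Finset.card_filter_le _ _).trans (Finset.card_range _).le

lemma isBoundedUnder_le_partialDensity (A : Set ℕ) :
    IsBoundedUnder (· ≤ ·) atTop (partialDensity A) :=
  isBoundedUnder_of ⟨1, partialDensity_le_one A⟩

lemma isBoundedUnder_ge_partialDensity (A : Set ℕ) :
    IsBoundedUnder (· ≥ ·) atTop (partialDensity A) :=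
  isBoundedUnder_of ⟨0, partialDensity_nonneg A⟩

lemma partialDensity_mono {A B : Set ℕ} {n : ℕ} (h : ∀ m ≤ n, m ∈ A → m ∈ B) :
    partialDensity A n ≤ partialDensity B n := by
  refine div_le_div_of_nonneg_right ?_ (by positivity)
  refine Nat.cast_le.mpr (Finset.card_le_card (Finset.monotone_filter_right _ ?_))
  intro m hm
  exact h m (Nat.lt_succ_iff.mp (Finset.mem_range.mp hm))

lemma partialDensity_add_le (A : Set ℕ) (n p : ℕ) :
    partialDensity A (n + p) ≤ partialDensity {j | j + p ∈ A} n + p / (n + 1) := by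
  have hcount : ((Finset.range (n + p + 1)).filter (· ∈ A)).card ≤
      ((Finset.range (n + 1)).filter (· ∈ {j | j + p ∈ A})).card + p := by
    rw [show n + p + 1 = p + (n + 1) by ring, Finset.range_add, Finset.filter_union,
      Finset.filter_map]
    refine (Finset.card_union_le _ _).trans ?_
    rw [Finset.card_map, add_comm]
    refine Nat.add_le_add (Finset.card_le_card fun j => ?_) ((Finset.card_filter_le _ _).trans ?_)
    · simp [add_comm]
    · simp
  unfold partialDensity
  rw [← add_div]
  calc _ ≤ (((Finset.range (n + 1)).filter (· ∈ {j | j + p ∈ A})).card + p : ℝ)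
        / (n + p + 1) := by push_cast; gcongr; exact_mod_cast hcount
    _ ≤ _ := by gcongr; linarith [(Nat.cast_nonneg p : (0 : ℝ) ≤ p)]

lemma upperDensity_mono {A B : Set ℕ} (h : A ⊆ B) : upperDensity A ≤ upperDensity B :=
  limsup_le_limsup (Eventually.of_forall fun _ => partialDensity_mono fun _ _ hm => h hm)
    (isBoundedUnder_ge_partialDensity A).isCoboundedUnder_le (isBoundedUnder_le_partialDensity B)

lemma le_upperDensity_of_frequently_le {A : Set ℕ} {c : ℝ}
    (h : ∃ᶠ n in atTop, c ≤ partialDensity A n) : c ≤ upperDensity A :=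
  le_limsup_of_frequently_le h (isBoundedUnder_le_partialDensity A)

lemma frequently_lt_partialDensity {A : Set ℕ} {c : ℝ} (h : c < upperDensity A) :
    ∃ᶠ n in atTop, c < partialDensity A n :=
  frequently_lt_of_lt_limsup (isBoundedUnder_ge_partialDensity A).isCoboundedUnder_le h

lemma nonempty_of_upperDensity_pos {A : Set ℕ} (h : 0 < upperDensity A) : A.Nonempty := by
  obtain ⟨n, hn⟩ := (frequently_lt_partialDensity h).exists
  have hcard := (div_pos_iff_of_pos_right (by positivity)).mp hn
  obtain ⟨m, hm⟩ := Finset.card_pos.mp (Nat.cast_pos.mp hcard)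
  exact ⟨m, (Finset.mem_filter.mp hm).2⟩

lemma upperDensity_le_upperDensity_add (A : Set ℕ) (p : ℕ) :
    upperDensity A ≤ upperDensity {j | j + p ∈ A} := by
  set B := {j | j + p ∈ A}
  have hvanish : Tendsto (fun n : ℕ => (p : ℝ) / (n + 1)) atTop (𝓝 0) := by
    simpa [Function.comp_def] using
      (tendsto_const_div_atTop_nhds_zero_nat (p : ℝ)).comp (tendsto_add_atTop_nat 1)
  calc upperDensity A = limsup (fun n => partialDensity A (n + p)) atTop :=
        (limsup_nat_add _ p).symm
    _ ≤ limsup (partialDensity B + fun n : ℕ => (p : ℝ) / (n + 1)) atTop :=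
        limsup_le_limsup (Eventually.of_forall fun n => partialDensity_add_le A n p)
          (isBoundedUnder_of ⟨0, fun n => partialDensity_nonneg A (n + p)⟩).isCoboundedUnder_le
          (isBoundedUnder_le_add (isBoundedUnder_le_partialDensity B) hvanish.isBoundedUnder_le)
    _ ≤ limsup (partialDensity B) atTop + limsup (fun n : ℕ => (p : ℝ) / (n + 1)) atTop :=
        limsup_add_le (isBoundedUnder_ge_partialDensity B) (isBoundedUnder_le_partialDensity B)
          hvanish.isBoundedUnder_ge.isCoboundedUnder_le hvanish.isBoundedUnder_le
    _ = upperDensity B := by rw [hvanish.limsup_eq, add_zero]; rfl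

lemma upperDensity_visits_le_iterate {X : Type*} (f : X → X) (x : X) (U : Set X) (p : ℕ) :
    upperDensity {n | f^[n] x ∈ U} ≤ upperDensity {n | f^[n] (f^[p] x) ∈ U} := by
  simpa only [Set.mem_ofPred_eq, ← Function.iterate_add_apply] using
    upperDensity_le_upperDensity_add {n | f^[n] x ∈ U} p

section Dynamics

variable {X : Type*} [TopologicalSpace X] {f : X → X}

def IsUFreqHypercyclic (f : X → X) (x : X) : Prop :=
  ∀ U : Set X, IsOpen U → U.Nonempty → 0 < upperDensity {n | f^[n] x ∈ U}

lemma IsUFreqHypercyclic.dense_range_iterate {x : X} (hx : IsUFreqHypercyclic f x) :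
    Dense (Set.range fun n => f^[n] x) := by
  refine dense_iff_inter_open.mpr fun U hU hne => ?_
  obtain ⟨n, hn⟩ := nonempty_of_upperDensity_pos (hx U hU hne)
  exact ⟨f^[n] x, hn, n, rfl⟩

lemma isOpen_setOf_le_partialDensity_visits (hf : Continuous f) {U : Set X} (hU : IsOpen U)
    (c : ℝ) (n : ℕ) : IsOpen {y | c ≤ partialDensity {m | f^[m] y ∈ U} n} := by
  refine isOpen_iff_mem_nhds.mpr fun y hy => ?_
  have hstay : ∀ᶠ z in 𝓝 y, ∀ m ∈ Finset.range (n + 1), f^[m] y ∈ U → f^[m] z ∈ U := by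
    refine eventually_all_finset _ |>.mpr fun m _ => ?_
    by_cases hm : f^[m] y ∈ U
    · filter_upwards [(hU.preimage (hf.iterate m)).mem_nhds hm] with z hz using fun _ => hz
    · exact Eventually.of_forall fun _ h => absurd h hm
  filter_upwards [hstay] with z hz
  exact hy.trans <| partialDensity_mono fun m hm =>
    hz m (Finset.mem_range.mpr (Nat.lt_succ_of_le hm))

lemma residual_setOf_frequently_le_partialDensity_visits (hf : Continuous f) {x : X}
    (hx : Dense (Set.range fun n => f^[n] x)) {U : Set X} (hU : IsOpen U) {c : ℝ}
    (hc : c < upperDensity {n | f^[n] x ∈ U}) :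
    {y | ∃ᶠ n in atTop, c ≤ partialDensity {m | f^[m] y ∈ U} n} ∈ residual X := by
  have hGδ : IsGδ {y | ∃ᶠ n in atTop, c ≤ partialDensity {m | f^[m] y ∈ U} n} := by
    have hset : {y | ∃ᶠ n in atTop, c ≤ partialDensity {m | f^[m] y ∈ U} n} =
        ⋂ N : ℕ, ⋃ n ≥ N, {y | c ≤ partialDensity {m | f^[m] y ∈ U} n} := by
      ext; simp [frequently_atTop]
    rw [hset]
    exact .iInter_of_isOpen fun N => isOpen_iUnion fun n => isOpen_iUnion fun _ =>
      isOpen_setOf_le_partialDensity_visits hf hU c n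
  refine residual_of_dense_Gδ hGδ (hx.mono ?_)
  rintro _ ⟨p, rfl⟩
  have hp := hc.trans_le (upperDensity_visits_le_iterate f x U p)
  exact (frequently_lt_partialDensity hp).mono fun _ => le_of_lt

theorem residual_setOf_isUFreqHypercyclic [SecondCountableTopology X] (hf : Continuous f)
    {x : X} (hx : IsUFreqHypercyclic f x) : {y | IsUFreqHypercyclic f y} ∈ residual X := by
  obtain ⟨b, hbc, -, hb⟩ := TopologicalSpace.exists_countable_basis X
  set δ : Set X → ℝ := fun s => upperDensity {n | f^[n] x ∈ s}
  have hG : (⋂ s ∈ {s ∈ b | s.Nonempty},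
      {y | ∃ᶠ n in atTop, δ s / 2 ≤ partialDensity {m | f^[m] y ∈ s} n}) ∈ residual X :=
    (countable_bInter_mem (hbc.mono fun _ hs => hs.1)).mpr fun s hs =>
      residual_setOf_frequently_le_partialDensity_visits hf hx.dense_range_iterate
        (hb.isOpen hs.1) (half_lt_self (hx s (hb.isOpen hs.1) hs.2))
  refine mem_of_superset hG fun y hy U hU ⟨z, hz⟩ => ?_
  obtain ⟨s, hsb, hzs, hsU⟩ := hb.exists_subset_of_mem_open hz hU
  have hδ : 0 < δ s := hx s (hb.isOpen hsb) ⟨z, hzs⟩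
  calc 0 < δ s / 2 := half_pos hδ
    _ ≤ upperDensity {n | f^[n] y ∈ s} :=
      le_upperDensity_of_frequently_le (Set.mem_iInter₂.mp hy s ⟨hsb, z, hzs⟩)
    _ ≤ upperDensity {n | f^[n] y ∈ U} := upperDensity_mono fun _ hn => hsU hn

end Dynamics

lemma uFreqHCVec_iff {E : Type*} [NormedAddCommGroup E] [NormedSpace ℝ E] (T : E →L[ℝ] E)
    (x : E) : uFreqHCVec T x ↔ IsUFreqHypercyclic T x := by
  simp only [uFreqHCVec, IsUFreqHypercyclic, FunLike.coe_pow_eq_iterate]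

theorem stmt17_general {X : Type*} [NormedAddCommGroup X] [NormedSpace ℝ X]
    [TopologicalSpace.SeparableSpace X]
    (T : X →L[ℝ] X) (hT : ∃ x, uFreqHCVec T x) :
    {x : X | uFreqHCVec T x} ∈ residual X := by
  obtain ⟨x, hx⟩ := hT
  simpa only [uFreqHCVec_iff] using
    residual_setOf_isUFreqHypercyclic T.continuous ((uFreqHCVec_iff T x).mp hx)

theorem stmt17 {X : Type*} [NormedAddCommGroup X] [NormedSpace ℝ X] [CompleteSpace X]
    [TopologicalSpace.SeparableSpace X]
    (T : X →L[ℝ] X) (hT : ∃ x, uFreqHCVec T x) :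
    {x : X | uFreqHCVec T x} ∈ residual X :=
  stmt17_general T hT
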